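/- arXiv:2511.04836 — 3 statements merged into one kernel-verified Lean document; each statement's English description precedes it below -/
import Mathlib

section
/- The map sending each s ∈ S to the product ∏_{b∈𝔅}(b,s) ∈ W̌ extends to a well-defined group homomorphism φ : W → W̌ (the factors (b,s), b ∈ 𝔅, pairwise commute in W̌, so the product is unambiguous). Moreover, the ℤ-linear isomorphism Ψ : RΛ_S → ℤΛ_Š determined by b·α_s ↦ α_{(b,s)} (b ∈ 𝔅, s ∈ S) is W-equivariant with respect to φ: Ψ(w·v) = φ(w)·Ψ(v) for all w ∈ W and v ∈ RΛ_S. -/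
open scoped BigOperators

noncomputable section

/-- Data of a fusion ring structure on a ring `R`, with `ℤ`-basis indexed by `ι`. -/
structure FusionData (R : Type*) [Ring R] (ι : Type*) [Fintype ι] [DecidableEq ι] where
  /-- the distinguished basis -/
  b : Module.Basis ι ℤ R
  /-- the index of the unit -/
  unit : ι
  b_unit : b unit = 1
  basis_mul_ne_zero : ∀ j k, b j * b k ≠ 0
  c_nonneg : ∀ j k i, 0 ≤ b.repr (b j * b k) i
  /-- the involution on the index set -/
  inv : ι → ι
  inv_invol : ∀ j, inv (inv j) = j
  /-- the `ℤ`-linear extension of the involution -/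
  star : R →+ R
  star_basis : ∀ j, star (b j) = b (inv j)
  star_mul : ∀ x y, star (x * y) = star y * star x
  c_unit_iff : ∀ j k, b.repr (b j * b k) unit = 1 ↔ k = inv j

namespace FusionData

variable {R : Type*} [Ring R] {ι : Type*} [Fintype ι] [DecidableEq ι]

/-- The structure constants of a fusion ring. -/
def c (F : FusionData R ι) (j k i : ι) : ℤ := F.b.repr (F.b j * F.b k) i

/-- Nonnegativity of an element of a fusion ring: all basis coefficients are nonnegative. -/
def nonneg (F : FusionData R ι) (r : R) : Prop := ∀ i, 0 ≤ F.b.repr r i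

end FusionData

/-- The basis vector `α_s` of the free module `S → R`. -/
def simRoot (R : Type*) [Ring R] {S : Type*} [DecidableEq S] (s : S) : S → R :=
  Pi.single s 1

/-- A geometric realisation of the Coxeter system `(W, S)` over a fusion ring `R`,
together with a Frobenius–Perron dimension homomorphism. -/
structure GeomSetting (R : Type*) [Ring R] (ι : Type*) [Fintype ι] [DecidableEq ι]
    (S : Type*) [Fintype S] [DecidableEq S] (W : Type*) [Group W] where
  /-- the fusion ring structure on `R` -/
  FD : FusionData R ι
  /-- the Coxeter matrix (`0` denotes `∞`) -/
  M : CoxeterMatrix S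
  /-- the Coxeter system -/
  cs : CoxeterSystem M W
  /-- the Frobenius–Perron dimension -/
  FP : R →+* ℝ
  FP_basis : ∀ i, 1 ≤ FP (FD.b i)
  FP_star : ∀ r, FP (FD.star r) = FP r
  /-- the sesquilinear form on `RΛ_S = S → R` -/
  B : (S → R) → (S → R) → R
  B_add_left : ∀ u u' v, B (u + u') v = B u v + B u' v
  B_add_right : ∀ u v v', B u (v + v') = B u v + B u v'
  B_sesq : ∀ (x y : R) (s t : S),
    B (x • simRoot R s) (y • simRoot R t)
      = y * B (simRoot R s) (simRoot R t) * FD.star x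
  cartan_diag : ∀ s, B (simRoot R s) (simRoot R s) = 2
  cartan_nonneg : ∀ s t, s ≠ t →
    FD.nonneg (-(B (simRoot R s) (simRoot R t)))
  cartan_star : ∀ s t, s ≠ t →
    B (simRoot R t) (simRoot R s)
      = FD.star (B (simRoot R s) (simRoot R t))
  cartan_fin : ∀ s t, s ≠ t → M s t ≠ 0 →
    FP (B (simRoot R s) (simRoot R t))
      = -2 * Real.cos (Real.pi / (M s t : ℝ))
  cartan_inf : ∀ s t, s ≠ t → M s t = 0 →
    FP (B (simRoot R s) (simRoot R t)) ≤ -2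
  /-- the left `R`-linear action of `W` on `RΛ_S` -/
  rep : W →* ((S → R) ≃ₗ[R] (S → R))
  rep_simple : ∀ (s : S) (v : S → R),
    rep (cs.simple s) v = v - B (simRoot R s) v • simRoot R s

namespace GeomSetting

variable {R : Type*} [Ring R] {ι : Type*} [Fintype ι] [DecidableEq ι]
  {S : Type*} [Fintype S] [DecidableEq S] {W : Type*} [Group W]

/-- The Cartan matrix `r_{s,t}` of the realisation. -/
def cartan (G : GeomSetting R ι S W) (s t : S) : R :=
  G.B (simRoot R s) (simRoot R t)

/-- The unfolded (integral) Cartan matrix `ř`. -/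
def rcheck (G : GeomSetting R ι S W) (p q : ι × S) : ℤ :=
  if p.2 = q.2 then (if p.1 = q.1 then 2 else 0)
  else G.FD.b.repr (G.FD.b q.1 * G.cartan p.2 q.2) p.1

/-- The unfolded Coxeter matrix `m̌` (`0` denotes `∞`). -/
def mcheck (G : GeomSetting R ι S W) (p q : ι × S) : ℕ :=
  if p = q then 1
  else if G.rcheck p q = 0 then 2
  else if G.rcheck p q = -1 then 3
  else 0

/-- The Coxeter relations of the unfolded Coxeter system. -/
def rels (G : GeomSetting R ι S W) : Set (FreeGroup (ι × S)) :=
  Set.range fun pq : (ι × S) × (ι × S) =>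
    (FreeGroup.of pq.1 * FreeGroup.of pq.2) ^ G.mcheck pq.1 pq.2

/-- The unfolded Coxeter group `W̌`. -/
def Wcheck (G : GeomSetting R ι S W) : Type _ := PresentedGroup G.rels

instance (G : GeomSetting R ι S W) : Group G.Wcheck :=
  QuotientGroup.Quotient.group _

/-- The generators `(b, s)` of the unfolded Coxeter group. -/
def gen (G : GeomSetting R ι S W) (p : ι × S) : G.Wcheck := PresentedGroup.of p

end GeomSetting


variable {R : Type*} [Ring R] {ι : Type*} [Fintype ι] [DecidableEq ι]
  {S : Type*} [Fintype S] [DecidableEq S] {W : Type*} [Group W]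


/-- The `ℤ`-linear identification `RΛ_S ≅ ℤΛ_Š`, `b_i · α_s ↦ α_{(b_i, s)}`, in coordinates. -/
def GeomSetting.Psi (G : GeomSetting R ι S W) (v : S → R) : (ι × S) → ℤ :=
  fun p => G.FD.b.repr (v p.2) p.1

/-!
The off-diagonal entries of the unfolded Cartan matrix `ř` are `0`, `-1` or `≤ -2`. Applying
the given representation `ρ̌` to the defining relations of `W̌` shows that `ř_{qp}` is in the
same class as `ř_{pq}`, so `m̌` is a Coxeter matrix and `ρ̌` is the geometric representation
of `W̌`. Tits' argument shows that this representation is faithful: if `ℓ(w s_p) > ℓ(w)`, then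
`w α_p ≥ 0`. To prove this, peel off the longest alternating suffix in `p` and a right
descent `q` of `w`; this suffix is shorter than `m_{pq}`, so it sends `α_p` to a nonnegative
combination of `α_p` and `α_q`.

Expanding `B(α_s, v)` through `ř` shows that `Ψ` turns `s` into the product of the pairwise
commuting reflections `(b, s)`. So the Coxeter relations of `W` hold for these products after
applying `ρ̌`. By faithfulness they also hold in `W̌`.
-/

lemma smul_single_add_smul_single_inj {B : Type*} [DecidableEq B] {p q : B} (hpq : p ≠ q)
    {x y x' y' : ℤ}
    (h : (x • Pi.single p 1 + y • Pi.single q 1 : B → ℤ)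
      = x' • Pi.single p 1 + y' • Pi.single q 1) :
    x = x' ∧ y = y' :=
  ⟨by simpa [hpq] using congrFun h p, by simpa [hpq.symm] using congrFun h q⟩

section CartanReflection

variable {B : Type*} [Fintype B] [DecidableEq B] (A : B → B → ℤ)

def cartanReflection (p : B) (v : B → ℤ) : B → ℤ :=
  v - (A p ⬝ᵥ v) • Pi.single p 1

variable {A}

lemma cartanReflection_single_self {p : B} (hp : A p p = 2) :
    cartanReflection A p (Pi.single p 1) = -Pi.single p 1 := by
  rw [cartanReflection, dotProduct_single, hp]
  module

lemma cartanReflection_pair_left {p q : B} (hp : A p p = 2) (x y : ℤ) :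
    cartanReflection A p (x • Pi.single p 1 + y • Pi.single q 1)
      = (-x - A p q * y) • Pi.single p 1 + y • Pi.single q 1 := by
  simp only [cartanReflection, dotProduct_add, dotProduct_smul, dotProduct_single, hp]
  module

lemma cartanReflection_pair_right {p q : B} (hq : A q q = 2) (x y : ℤ) :
    cartanReflection A q (x • Pi.single p 1 + y • Pi.single q 1)
      = x • Pi.single p 1 + (-y - A q p * x) • Pi.single q 1 := by
  rw [add_comm, cartanReflection_pair_left hq, add_comm]

variable {G : Type*} [Monoid G] {ρ : G →* ((B → ℤ) ≃ₗ[ℤ] (B → ℤ))} {g : B → G}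

lemma apply_list_prod_eq_sub_sum (hρ : ∀ p v, ρ (g p) v = cartanReflection A p v)
    {l : List B} (hl : l.Pairwise fun p q => A p q = 0) (v : B → ℤ) :
    ρ (l.map g).prod v = v - (l.map fun p => (A p ⬝ᵥ v) • Pi.single p 1).sum := by
  induction l with
  | nil => simp
  | cons p l ih =>
    obtain ⟨hp, hl⟩ := List.pairwise_cons.mp hl
    have hcoeff : A p ⬝ᵥ (l.map fun p' => (A p' ⬝ᵥ v) • Pi.single p' 1).sum = 0 := by
      refine (map_list_sum (dotProductBilin ℤ ℤ (A p) : (B → ℤ) →+ ℤ) _).trans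
        (List.sum_eq_zero fun x hx => ?_)
      rw [List.map_map] at hx
      obtain ⟨p', hp', rfl⟩ := List.mem_map.mp hx
      change A p ⬝ᵥ ((A p' ⬝ᵥ v) • Pi.single p' 1) = 0
      rw [dotProduct_smul, dotProduct_single, hp p' hp', zero_mul, smul_zero]
    rw [List.map_cons, List.prod_cons, map_mul, LinearEquiv.mul_apply, ih hl, hρ,
      cartanReflection, dotProduct_sub, hcoeff, sub_zero, List.map_cons, List.sum_cons]
    abel

lemma cartan_swap_eq_zero_of_mul_pow_two_eq_one (hρ : ∀ p v, ρ (g p) v = cartanReflection A p v)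
    {p q : B} (hpq : p ≠ q) (hp : A p p = 2) (hq : A q q = 2) (hrel : (g p * g q) ^ 2 = 1)
    (h : A p q = 0) : A q p = 0 := by
  have happ := congrArg (fun x => ρ x ((1 : ℤ) • Pi.single p 1 + (0 : ℤ) • Pi.single q 1)) hrel
  simp only [pow_succ, pow_zero, one_mul, map_mul, LinearEquiv.mul_apply, hρ,
    cartanReflection_pair_left hp, cartanReflection_pair_right hq, map_one,
    LinearEquiv.coe_one, id_eq, h] at happ
  linarith [(smul_single_add_smul_single_inj hpq happ).2]

lemma cartan_swap_eq_neg_one_of_mul_pow_three_eq_one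
    (hρ : ∀ p v, ρ (g p) v = cartanReflection A p v)
    {p q : B} (hpq : p ≠ q) (hp : A p p = 2) (hq : A q q = 2) (hrel : (g p * g q) ^ 3 = 1)
    (h : A p q = -1) : A q p = -1 := by
  have happ := congrArg (fun x => ρ x ((1 : ℤ) • Pi.single p 1 + (0 : ℤ) • Pi.single q 1)) hrel
  simp only [pow_succ, pow_zero, one_mul, map_mul, LinearEquiv.mul_apply, hρ,
    cartanReflection_pair_left hp, cartanReflection_pair_right hq, map_one,
    LinearEquiv.coe_one, id_eq, h] at happ
  obtain ⟨hx, hy⟩ := smul_single_add_smul_single_inj hpq happ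
  -- the `α_q`-coordinate vanishes only for `A q p ∈ {0, -1, -3}`, and the `α_p`-coordinate
  -- rules out `0` and `-3`
  have hcubic : A q p * ((A q p + 1) * (A q p + 3)) = 0 := by linear_combination -hy
  rcases mul_eq_zero.mp hcubic with h0 | h13
  · rw [h0] at hx
    norm_num at hx
  rcases mul_eq_zero.mp h13 with h1 | h3
  · linarith
  · rw [eq_neg_of_add_eq_zero_left h3] at hx
    norm_num at hx

end CartanReflection

structure CoxeterMatrix.IsIntegralCartan {B : Type*} (M : CoxeterMatrix B) (A : B → B → ℤ) :
    Prop where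
  diag : ∀ p, A p p = 2
  off_diag : ∀ p q, p ≠ q →
    (M p q = 2 ∧ A p q = 0) ∨ (M p q = 3 ∧ A p q = -1) ∨ (M p q = 0 ∧ A p q ≤ -2)

namespace CoxeterSystem

variable {B W : Type*} [Group W] {M : CoxeterMatrix B} (cs : CoxeterSystem M W)

lemma exists_eq_mul_wordProd_alternatingWord {w : W} {p q : B} (hq : cs.IsRightDescent w q) :
    ∃ (u : W) (k : ℕ), 0 < k ∧ w = u * cs.wordProd (alternatingWord p q k) ∧
      cs.length u + k = cs.length w ∧ ¬ cs.IsRightDescent u p ∧ ¬ cs.IsRightDescent u q := by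
  induction hn : cs.length w using Nat.strong_induction_on generalizing w p q with
  | _ n ih =>
    have hlen : cs.length (w * cs.simple q) + 1 = n := hn ▸ cs.isRightDescent_iff.mp hq
    by_cases hp : cs.IsRightDescent (w * cs.simple q) p
    · obtain ⟨u, k, hk, hw, hl, hup, huq⟩ := ih _ (by omega) hp rfl
      refine ⟨u, k + 1, k.succ_pos, ?_, by omega, huq, hup⟩
      rw [alternatingWord_succ, wordProd_concat, ← mul_assoc, ← hw,
        simple_mul_simple_cancel_right]
    · refine ⟨w * cs.simple q, 1, one_pos, ?_, hlen, hp,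
        cs.isRightDescent_iff_not_isRightDescent_mul.mp hq⟩
      rw [show alternatingWord p q 1 = [q] from rfl, wordProd_singleton,
        simple_mul_simple_cancel_right]

lemma lt_of_not_isRightDescent_mul_wordProd_alternatingWord {u : W} {p q : B} {k : ℕ}
    (hM : M p q ≠ 0) (hlen : cs.length u + k = cs.length (u * cs.wordProd (alternatingWord p q k)))
    (hp : ¬ cs.IsRightDescent (u * cs.wordProd (alternatingWord p q k)) p) : k < M p q := by
  have hup := cs.not_isRightDescent_iff.mp hp
  rw [mul_assoc, ← wordProd_concat, ← alternatingWord_succ] at hup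
  have hreduced : cs.IsReduced (alternatingWord q p (k + 1)) := by
    have h₁ := cs.length_mul_le u (cs.wordProd (alternatingWord q p (k + 1)))
    have h₂ := cs.length_wordProd_le (alternatingWord q p (k + 1))
    rw [length_alternatingWord] at h₂
    rw [IsReduced, length_alternatingWord]
    omega
  by_contra! hk
  exact cs.not_isReduced_alternatingWord q p (M.symmetric q p ▸ hM)
    (by rw [M.symmetric]; omega) hreduced

variable [Fintype B] [DecidableEq B] {A : B → B → ℤ} {ρ : W →* ((B → ℤ) ≃ₗ[ℤ] (B → ℤ))}

lemma apply_wordProd_alternatingWord_succ (hdiag : ∀ p, A p p = 2)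
    (hρ : ∀ p v, ρ (cs.simple p) v = cartanReflection A p v) {p q : B} {k : ℕ} {a b : ℤ}
    (h : ρ (cs.wordProd (alternatingWord p q k)) (Pi.single p 1)
      = a • Pi.single p 1 + b • Pi.single q 1) :
    ρ (cs.wordProd (alternatingWord p q (k + 1))) (Pi.single p 1) =
      if Even k then a • Pi.single p 1 + (-b - A q p * a) • Pi.single q 1
      else (-a - A p q * b) • Pi.single p 1 + b • Pi.single q 1 := by
  rw [alternatingWord_succ', wordProd_cons, map_mul, LinearEquiv.mul_apply, h, hρ]
  split_ifs
  · exact cartanReflection_pair_right (hdiag q) a b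
  · exact cartanReflection_pair_left (hdiag p) a b

/-- For `m_{pq} = ∞` the coefficient updated last dominates the other one, which keeps the next
update nonnegative. -/
lemma exists_nonneg_apply_wordProd_alternatingWord_of_le_neg_two (hdiag : ∀ p, A p p = 2)
    (hρ : ∀ p v, ρ (cs.simple p) v = cartanReflection A p v) {p q : B}
    (hpq : A p q ≤ -2) (hqp : A q p ≤ -2) (k : ℕ) :
    ∃ a b : ℤ, 0 ≤ a ∧ 0 ≤ b ∧ (if Even k then b ≤ a else a ≤ b) ∧
      ρ (cs.wordProd (alternatingWord p q k)) (Pi.single p 1)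
        = a • Pi.single p 1 + b • Pi.single q 1 := by
  induction k with
  | zero => exact ⟨1, 0, zero_le_one, le_rfl, by simp, by simp [alternatingWord]⟩
  | succ k ih =>
    obtain ⟨a, b, ha, hb, hab, h⟩ := ih
    rw [cs.apply_wordProd_alternatingWord_succ hdiag hρ h]
    by_cases hk : Even k
    · rw [if_pos hk] at hab
      refine ⟨a, -b - A q p * a, ha, by nlinarith, ?_, if_pos hk⟩
      rw [if_neg (Nat.even_add_one.not.mpr (not_not.mpr hk))]
      nlinarith
    · rw [if_neg hk] at hab
      refine ⟨-a - A p q * b, b, by nlinarith, hb, ?_, if_neg hk⟩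
      rw [if_pos (Nat.even_add_one.mpr hk)]
      nlinarith

lemma exists_nonneg_apply_wordProd_alternatingWord (hA : M.IsIntegralCartan A)
    (hρ : ∀ p v, ρ (cs.simple p) v = cartanReflection A p v) {p q : B} (hpq : p ≠ q) {k : ℕ}
    (hk : M p q = 0 ∨ k < M p q) :
    ∃ a b : ℤ, 0 ≤ a ∧ 0 ≤ b ∧
      ρ (cs.wordProd (alternatingWord p q k)) (Pi.single p 1)
        = a • Pi.single p 1 + b • Pi.single q 1 := by
  have h₀ : ρ (cs.wordProd (alternatingWord p q 0)) (Pi.single p 1)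
      = (1 : ℤ) • Pi.single p 1 + (0 : ℤ) • Pi.single q 1 := by
    simp [alternatingWord]
  have h₁ := cs.apply_wordProd_alternatingWord_succ hA.diag hρ h₀
  rw [if_pos Even.zero] at h₁
  have h₂ := cs.apply_wordProd_alternatingWord_succ hA.diag hρ h₁
  rw [if_neg Nat.not_even_one] at h₂
  have hqp := hA.off_diag q p hpq.symm
  rw [M.symmetric q p] at hqp
  obtain ⟨hM, hA₁⟩ | ⟨hM, hA₁⟩ | ⟨hM, hA₁⟩ := hA.off_diag p q hpq <;>
  obtain ⟨hM', hA₂⟩ | ⟨hM', hA₂⟩ | ⟨hM', hA₂⟩ := hqp <;> simp only [hM] at hM' hk <;>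
    try omega
  · obtain hk : k < 2 := by omega
    interval_cases k
    · exact ⟨1, 0, zero_le_one, le_rfl, h₀⟩
    · exact ⟨1, _, zero_le_one, by simp [hA₂], h₁⟩
  · obtain hk : k < 3 := by omega
    interval_cases k
    · exact ⟨1, 0, zero_le_one, le_rfl, h₀⟩
    · exact ⟨1, _, zero_le_one, by simp [hA₂], h₁⟩
    · exact ⟨_, _, by simp [hA₁, hA₂], by simp [hA₂], h₂⟩
  · obtain ⟨a, b, ha, hb, -, h⟩ :=
      cs.exists_nonneg_apply_wordProd_alternatingWord_of_le_neg_two hA.diag hρ hA₁ hA₂ k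
    exact ⟨a, b, ha, hb, h⟩

theorem nonneg_apply_single_of_not_isRightDescent (hA : M.IsIntegralCartan A)
    (hρ : ∀ p v, ρ (cs.simple p) v = cartanReflection A p v) {w : W} {p : B}
    (hp : ¬ cs.IsRightDescent w p) : 0 ≤ ρ w (Pi.single p 1) := by
  induction hn : cs.length w using Nat.strong_induction_on generalizing w p with
  | _ n ih =>
    rcases eq_or_ne w 1 with rfl | hw
    · simp [Pi.single_nonneg]
    obtain ⟨q, hq⟩ := cs.exists_rightDescent_of_ne_one hw
    have hpq : p ≠ q := by
      rintro rfl
      exact hp hq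
    obtain ⟨u, k, hk, rfl, hlen, hup, huq⟩ := cs.exists_eq_mul_wordProd_alternatingWord (p := p) hq
    have hkM : M p q = 0 ∨ k < M p q := or_iff_not_imp_left.mpr fun hM =>
      cs.lt_of_not_isRightDescent_mul_wordProd_alternatingWord hM hlen hp
    obtain ⟨a, b, ha, hb, hab⟩ := cs.exists_nonneg_apply_wordProd_alternatingWord hA hρ hpq hkM
    rw [map_mul, LinearEquiv.mul_apply, hab, map_add, map_smul, map_smul]
    exact add_nonneg (smul_nonneg ha (ih _ (by omega) hup rfl))
      (smul_nonneg hb (ih _ (by omega) huq rfl))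

theorem injective_of_isIntegralCartan (hA : M.IsIntegralCartan A)
    (hρ : ∀ p v, ρ (cs.simple p) v = cartanReflection A p v) : Function.Injective ρ := by
  refine (injective_iff_map_eq_one ρ).mpr fun w hw => ?_
  by_contra hne
  obtain ⟨q, hq⟩ := cs.exists_rightDescent_of_ne_one hne
  have hnonneg := cs.nonneg_apply_single_of_not_isRightDescent hA hρ
    (cs.isRightDescent_iff_not_isRightDescent_mul.mp hq)
  have hneg : ρ (w * cs.simple q) (Pi.single q 1) = -Pi.single q 1 := by
    rw [map_mul, LinearEquiv.mul_apply, hρ, cartanReflection_single_self (hA.diag q), map_neg, hw,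
      LinearEquiv.coe_one, id]
  rw [hneg] at hnonneg
  simpa using hnonneg q

end CoxeterSystem

namespace Module.Basis

variable {ι R : Type*} [Fintype ι] [Ring R] (b : Module.Basis ι ℤ R)

lemma repr_mul_apply_eq_sum_left (x y : R) (j : ι) :
    b.repr (x * y) j = ∑ i, b.repr x i * b.repr (b i * y) j := by
  conv_lhs => rw [← b.sum_repr x, Finset.sum_mul, map_sum, Finsupp.finsetSum_apply]
  simp only [smul_mul_assoc, map_zsmul, Finsupp.smul_apply, smul_eq_mul]

lemma repr_mul_apply_eq_sum_right (x y : R) (k : ι) :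
    b.repr (x * y) k = ∑ j, b.repr y j * b.repr (x * b j) k := by
  conv_lhs => rw [← b.sum_repr y, Finset.mul_sum, map_sum, Finsupp.finsetSum_apply]
  simp only [mul_smul_comm, map_zsmul, Finsupp.smul_apply, smul_eq_mul]

end Module.Basis

namespace FusionData

variable {R : Type*} [Ring R] {ι : Type*} [Fintype ι] [DecidableEq ι] (F : FusionData R ι)

lemma inv_unit : F.inv F.unit = F.unit := by
  refine ((F.c_unit_iff _ _).mp ?_).symm
  rw [F.b_unit, one_mul, ← F.b_unit, F.b.repr_self, Finsupp.single_eq_same]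

lemma star_one : F.star 1 = 1 := by
  rw [← F.b_unit, F.star_basis, F.inv_unit]

end FusionData

namespace GeomSetting

variable (G : GeomSetting R ι S W)

lemma B_simRoot_eq_sum (s : S) (v : S → R) : G.B (simRoot R s) v = ∑ t, v t * G.cartan s t := by
  let f : (S → R) →+ R := AddMonoidHom.mk' (G.B (simRoot R s)) (G.B_add_right _)
  have hv : v = ∑ t, v t • simRoot R t := by
    simp [simRoot, ← Pi.single_smul, Finset.univ_sum_single]
  calc G.B (simRoot R s) v = f (∑ t, v t • simRoot R t) := congrArg f hv
    _ = ∑ t, G.B ((1 : R) • simRoot R s) (v t • simRoot R t) := by simp [f]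
    _ = ∑ t, v t * G.cartan s t := by simp only [G.B_sesq, G.FD.star_one, mul_one, cartan]

lemma rcheck_eq_repr (i j : ι) (s t : S) :
    G.rcheck (j, s) (i, t) = G.FD.b.repr (G.FD.b i * G.cartan s t) j := by
  unfold rcheck
  split_ifs with hst hji
  · subst hst hji
    simp [cartan, G.cartan_diag, mul_two]
  · subst hst
    simp [cartan, G.cartan_diag, mul_two, Ne.symm hji]
  · rfl

lemma rcheck_self (p : ι × S) : G.rcheck p p = 2 := by simp [rcheck]

lemma rcheck_of_fst_ne {i j : ι} (s : S) (hij : i ≠ j) : G.rcheck (i, s) (j, s) = 0 := by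
  simp [rcheck, hij]

lemma rcheck_nonpos {p q : ι × S} (hpq : p ≠ q) : G.rcheck p q ≤ 0 := by
  obtain ⟨j, s⟩ := p
  obtain ⟨i, t⟩ := q
  by_cases hst : s = t
  · subst hst
    rw [G.rcheck_of_fst_ne s (by rintro rfl; exact hpq rfl)]
  rw [G.rcheck_eq_repr, Module.Basis.repr_mul_apply_eq_sum_right]
  refine Finset.sum_nonpos fun k _ => mul_nonpos_of_nonpos_of_nonneg ?_ (G.FD.c_nonneg i k j)
  simpa [cartan] using G.cartan_nonneg s t hst k

lemma mcheck_spec {p q : ι × S} (hpq : p ≠ q) :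
    (G.mcheck p q = 2 ∧ G.rcheck p q = 0) ∨ (G.mcheck p q = 3 ∧ G.rcheck p q = -1) ∨
      (G.mcheck p q = 0 ∧ G.rcheck p q ≤ -2) := by
  have := G.rcheck_nonpos hpq
  unfold mcheck
  rw [if_neg hpq]
  split_ifs <;> omega

lemma repr_B_simRoot (s : S) (v : S → R) (j : ι) :
    G.FD.b.repr (G.B (simRoot R s) v) j = (fun q => G.rcheck (j, s) q) ⬝ᵥ G.Psi v := by
  rw [B_simRoot_eq_sum, map_sum, Finsupp.finsetSum_apply, dotProduct, Fintype.sum_prod_type_right]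
  refine Finset.sum_congr rfl fun t _ => ?_
  rw [Module.Basis.repr_mul_apply_eq_sum_left]
  exact Finset.sum_congr rfl fun i _ => by rw [rcheck_eq_repr, mul_comm]; rfl

lemma Psi_bijective : Function.Bijective G.Psi :=
  ⟨fun _ _ h => funext fun s => G.FD.b.repr.injective (Finsupp.ext fun i => congrFun h (i, s)),
    fun f => ⟨fun s => G.FD.b.equivFun.symm fun i => f (i, s), funext fun p =>
      congrFun (G.FD.b.equivFun.apply_symm_apply fun i => f (i, p.2)) p.1⟩⟩

def genProd (s : S) : G.Wcheck :=
  ((Finset.univ : Finset ι).toList.map fun i => G.gen (i, s)).prod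

lemma gen_mul_gen_pow_mcheck (p q : ι × S) : (G.gen p * G.gen q) ^ G.mcheck p q = 1 := by
  have := PresentedGroup.one_of_mem (rels := G.rels) ⟨(p, q), rfl⟩
  rw [map_pow, map_mul] at this
  exact this

lemma commute_gen (s : S) (i j : ι) : Commute (G.gen (i, s)) (G.gen (j, s)) := by
  rcases eq_or_ne i j with rfl | hij
  · exact Commute.refl _
  have hinv : ∀ p, (G.gen p)⁻¹ = G.gen p := fun p =>
    inv_eq_of_mul_eq_one_right (by simpa [mcheck] using G.gen_mul_gen_pow_mcheck p p)
  have hrel : (G.gen (i, s) * G.gen (j, s)) ^ 2 = 1 := by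
    simpa [mcheck, G.rcheck_of_fst_ne s hij, hij] using G.gen_mul_gen_pow_mcheck (i, s) (j, s)
  calc G.gen (i, s) * G.gen (j, s) = (G.gen (i, s) * G.gen (j, s))⁻¹ :=
        (inv_eq_of_mul_eq_one_right (by rwa [← sq])).symm
    _ = G.gen (j, s) * G.gen (i, s) := by rw [mul_inv_rev, hinv, hinv]

def unfoldedCoxeterMatrix (hsymm : ∀ p q, G.mcheck p q = G.mcheck q p) :
    CoxeterMatrix (ι × S) where
  M := Matrix.of G.mcheck
  isSymm := Matrix.IsSymm.ext fun p q => hsymm q p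
  diagonal p := by simp [mcheck]
  off_diagonal p q hpq := by
    simp only [Matrix.of_apply, mcheck, if_neg hpq]
    split_ifs <;> simp

def unfoldedCoxeterSystem (hsymm : ∀ p q, G.mcheck p q = G.mcheck q p) :
    CoxeterSystem (G.unfoldedCoxeterMatrix hsymm) G.Wcheck :=
  ⟨MulEquiv.refl _⟩

def intertwiners (rhoL : G.Wcheck →* (((ι × S) → ℤ) ≃ₗ[ℤ] ((ι × S) → ℤ))) :
    Submonoid (W × G.Wcheck) where
  carrier := {x | ∀ v, G.Psi (G.rep x.1 v) = rhoL x.2 (G.Psi v)}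
  mul_mem' {x y} hx hy v := by
    rw [Prod.fst_mul, Prod.snd_mul, map_mul, map_mul, LinearEquiv.mul_apply, LinearEquiv.mul_apply,
      hx, hy]
  one_mem' v := by simp

lemma eq_one_of_one_mem_intertwiners {rhoL : G.Wcheck →* (((ι × S) → ℤ) ≃ₗ[ℤ] ((ι × S) → ℤ))}
    {z : G.Wcheck} (hz : (1, z) ∈ G.intertwiners rhoL) : rhoL z = 1 :=
  LinearEquiv.ext fun x => by
    obtain ⟨v, rfl⟩ := G.Psi_bijective.2 x
    simpa using (hz v).symm

variable {G} {rhoL : G.Wcheck →* (((ι × S) → ℤ) ≃ₗ[ℤ] ((ι × S) → ℤ))}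
  (hrhoL : ∀ (p : ι × S) (v : (ι × S) → ℤ), rhoL (G.gen p) v = cartanReflection G.rcheck p v)
include hrhoL

lemma rhoL_genProd (s : S) (x : ι × S → ℤ) :
    rhoL (G.genProd s) x = x - ∑ i, (G.rcheck (i, s) ⬝ᵥ x) • Pi.single (i, s) 1 := by
  have hl : ((Finset.univ : Finset ι).toList.map (·, s)).Pairwise fun p q => G.rcheck p q = 0 :=
    (Finset.univ.nodup_toList.map fun _ _ h => (Prod.mk.inj h).1).pairwise_of_forall_ne
      fun p hp q hq hpq => by
        obtain ⟨i, -, rfl⟩ := List.mem_map.mp hp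
        obtain ⟨j, -, rfl⟩ := List.mem_map.mp hq
        exact G.rcheck_of_fst_ne s fun hij => hpq (hij ▸ rfl)
  have := apply_list_prod_eq_sub_sum hrhoL hl x
  rwa [List.map_map, List.map_map, Finset.sum_map_toList] at this

lemma Psi_rep_simple (s : S) (v : S → R) :
    G.Psi (G.rep (G.cs.simple s) v) = rhoL (G.genProd s) (G.Psi v) := by
  funext ⟨j, u⟩
  rw [G.rhoL_genProd hrhoL, G.rep_simple]
  rcases eq_or_ne u s with rfl | hus
  · have hB := G.repr_B_simRoot u v j
    simp only [simRoot] at hB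
    simp [Psi, simRoot, hB, Pi.single_apply]
  · simp [Psi, simRoot, hus]

lemma rcheck_swap_eq_zero {p q : ι × S} (hpq : p ≠ q) (h : G.rcheck p q = 0) :
    G.rcheck q p = 0 :=
  cartan_swap_eq_zero_of_mul_pow_two_eq_one hrhoL hpq (G.rcheck_self p) (G.rcheck_self q)
    (by simpa [mcheck, hpq, h] using G.gen_mul_gen_pow_mcheck p q) h

lemma rcheck_swap_eq_neg_one {p q : ι × S} (hpq : p ≠ q) (h : G.rcheck p q = -1) :
    G.rcheck q p = -1 :=
  cartan_swap_eq_neg_one_of_mul_pow_three_eq_one hrhoL hpq (G.rcheck_self p) (G.rcheck_self q)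
    (by simpa [mcheck, hpq, h] using G.gen_mul_gen_pow_mcheck p q) h

lemma mcheck_symm (p q : ι × S) : G.mcheck p q = G.mcheck q p := by
  rcases eq_or_ne p q with rfl | hpq
  · rfl
  have h₀ : G.rcheck p q = 0 ↔ G.rcheck q p = 0 :=
    ⟨rcheck_swap_eq_zero hrhoL hpq, rcheck_swap_eq_zero hrhoL hpq.symm⟩
  have h₁ : G.rcheck p q = -1 ↔ G.rcheck q p = -1 :=
    ⟨rcheck_swap_eq_neg_one hrhoL hpq, rcheck_swap_eq_neg_one hrhoL hpq.symm⟩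
  simp only [mcheck, hpq, hpq.symm, if_false, h₀, h₁]

lemma injective_rhoL : Function.Injective rhoL :=
  (G.unfoldedCoxeterSystem (mcheck_symm hrhoL)).injective_of_isIntegralCartan
    ⟨G.rcheck_self, fun _ _ => G.mcheck_spec⟩ hrhoL

lemma simple_genProd_mem_intertwiners (s : S) :
    (G.cs.simple s, G.genProd s) ∈ G.intertwiners rhoL :=
  Psi_rep_simple hrhoL s

lemma isLiftable_genProd : G.M.IsLiftable G.genProd := fun s t => injective_rhoL hrhoL <| by
  have := pow_mem (mul_mem (simple_genProd_mem_intertwiners hrhoL s)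
    (simple_genProd_mem_intertwiners hrhoL t)) (G.M s t)
  rw [Prod.mk_mul_mk, Prod.pow_mk, G.cs.simple_mul_simple_pow] at this
  rw [map_one]
  exact G.eq_one_of_one_mem_intertwiners this

lemma mk_mem_intertwiners_of_map_simple {phi : W →* G.Wcheck}
    (hphi : ∀ s, phi (G.cs.simple s) = G.genProd s) (w : W) : (w, phi w) ∈ G.intertwiners rhoL := by
  have : Submonoid.closure (Set.range G.cs.simple)
      ≤ (G.intertwiners rhoL).comap ((MonoidHom.id W).prod phi) :=
    Submonoid.closure_le.mpr <| Set.range_subset_iff.mpr fun s => by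
      simpa [hphi] using simple_genProd_mem_intertwiners hrhoL s
  rw [G.cs.submonoid_closure_range_simple] at this
  exact this (Submonoid.mem_top w)

end GeomSetting

/-- **Proposition (unfolding homomorphism).** The map `s ↦ ∏_{b ∈ 𝔅} (b, s)` extends to a
group homomorphism `φ : W → W̌` (the factors pairwise commute), and the `ℤ`-linear
isomorphism `Ψ : RΛ_S → ℤΛ_Š`, `b·α_s ↦ α_{(b,s)}`, is `W`-equivariant with respect to `φ`. -/
theorem unfolding_homomorphism_exists (G : GeomSetting R ι S W)
    (rhoL : G.Wcheck →* (((ι × S) → ℤ) ≃ₗ[ℤ] ((ι × S) → ℤ)))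
    (hrhoL : ∀ (p : ι × S) (v : (ι × S) → ℤ),
      rhoL (G.gen p) v = v - (∑ q, G.rcheck p q * v q) • Pi.single p (1 : ℤ)) :
    (∀ (s : S) (i j : ι), Commute (G.gen (i, s)) (G.gen (j, s)))
    ∧ Function.Bijective G.Psi
    ∧ ∃ phi : W →* G.Wcheck,
        (∀ s : S, phi (G.cs.simple s)
            = ((Finset.univ : Finset ι).toList.map fun i => G.gen (i, s)).prod)
        ∧ ∀ (w : W) (v : S → R), G.Psi (G.rep w v) = rhoL (phi w) (G.Psi v) := by
  have hphi := G.cs.lift_apply_simple (GeomSetting.isLiftable_genProd hrhoL)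
  exact ⟨G.commute_gen, G.Psi_bijective, _, hphi,
    GeomSetting.mk_mem_intertwiners_of_map_simple hrhoL hphi⟩


end
end

section
/- For every w ∈ W and every Z ∈ Hom_R(RΛ_S,ℝ), viewing Z as an element of Hom_ℤ(RΛ_S,ℝ), one has φ(w)·Z = w·Z. In particular the subspace Hom_R(RΛ_S,ℝ) ⊆ Hom_ℤ(RΛ_S,ℝ) is invariant under φ(W) ⊆ W̌, and the inclusion Hom_R(RΛ_S,ℝ) ⊆ Hom_ℤ(RΛ_S,ℝ) is W-equivariant with respect to the unfolding homomorphism φ. -/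
open scoped BigOperators

noncomputable section

section Hyperplanes

variable {X : Type*} {G : Type*} [Group G]

/-- The closed fundamental cone in coordinates. -/
def coneC (X : Type*) : Set (X → ℝ) := {Z | ∀ x, 0 ≤ Z x}

/-- The open fundamental cone in coordinates. -/
def coneCo (X : Type*) : Set (X → ℝ) := {Z | ∀ x, 0 < Z x}

/-- The coordinate hyperplane (wall) at `x`. -/
def wallH (X : Type*) (x : X) : Set (X → ℝ) := {Z | Z x = 0}

/-- The Tits cone of an action given in coordinates on the dual space. -/
def titsT (rho : G →* ((X → ℝ) ≃ₗ[ℝ] (X → ℝ))) : Set (X → ℝ) :=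
  ⋃ g : G, rho g '' coneC X

/-- The hyperplane system of an action. -/
def hypSys (rho : G →* ((X → ℝ) ≃ₗ[ℝ] (X → ℝ))) : Set (Set (X → ℝ)) :=
  {H | ∃ (g : G) (x : X), H = rho g '' wallH X x}

/-- The complexified hyperplane complement. -/
def omegaReg (rho : G →* ((X → ℝ) ≃ₗ[ℝ] (X → ℝ))) : Set ((X → ℝ) × (X → ℝ)) :=
  (interior (titsT rho) ×ˢ interior (titsT rho)) \ ⋃ H ∈ hypSys rho, H ×ˢ H

end Hyperplanes

/-- The embedding `Hom_R(RΛ_S, ℝ) → Hom_ℤ(RΛ_S, ℝ)` in coordinates: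
`Z(α_s) ↦ (Z(b_i · α_s))_{(i,s)} = (FPdim(b_i) · Z(α_s))_{(i,s)}`. -/
def GeomSetting.emb {R : Type*} [Ring R] {ι : Type*} [Fintype ι] [DecidableEq ι]
    {S : Type*} [Fintype S] [DecidableEq S] {W : Type*} [Group W]
    (G : GeomSetting R ι S W) (Z : S → ℝ) : (ι × S) → ℝ :=
  fun p => G.FP (G.FD.b p.1) * Z p.2

variable {R : Type*} [Ring R] {ι : Type*} [Fintype ι] [DecidableEq ι]
  {S : Type*} [Fintype S] [DecidableEq S] {W : Type*} [Group W]

/-! The factors `(b_i, s)` of `φ(s)` are reflections with pairwise orthogonal roots, so `φ(s)` acts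
on `Y` by `Y q - ∑ᵢ ř_{(b_i,s),q} Y(b_i,s)`. For `Y = emb Z` and `q = (b_j,t)` that sum is
`FPdim(b_j · r_{s,t}) Z(s) = FPdim(b_j) FPdim(r_{s,t}) Z(s)`, since `ř_{(·,s),(b_j,t)}` are the
coordinates of `b_j · r_{s,t}` and FPdim is a ring homomorphism: this is `emb` of `s · Z`.
Agreement on the simple reflections propagates to all of `W`. -/

section OrthogonalReflections

variable {K X I H : Type*} [Ring K] [Monoid H]
  (ρ : H →* ((X → K) ≃ₗ[K] (X → K))) (g : I → H) (e : I → X) (a : I → X → K)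

lemma list_prod_apply_of_orthogonal (hg : ∀ i Y x, ρ (g i) Y x = Y x - a i x * Y (e i))
    (horth : ∀ i j, i ≠ j → a i (e j) = 0) {L : List I} (hL : L.Nodup) (Y : X → K) (x : X) :
    ρ (L.map g).prod Y x = Y x - (L.map fun i => a i x * Y (e i)).sum := by
  induction L generalizing x with
  | nil => simp
  | cons i L ih =>
    obtain ⟨hiL, hL⟩ := List.nodup_cons.mp hL
    have hfix : ρ (L.map g).prod Y (e i) = Y (e i) := by
      rw [ih hL, sub_eq_self]
      refine List.sum_eq_zero fun c hc => ?_
      obtain ⟨j, hj, rfl⟩ := List.mem_map.mp hc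
      rw [horth j i (ne_of_mem_of_not_mem hj hiL), zero_mul]
    rw [List.map_cons, List.prod_cons, map_mul, LinearEquiv.mul_apply, hg, hfix, ih hL,
      List.map_cons, List.sum_cons]
    abel

lemma finset_toList_prod_apply_of_orthogonal (hg : ∀ i Y x, ρ (g i) Y x = Y x - a i x * Y (e i))
    (horth : ∀ i j, i ≠ j → a i (e j) = 0) (s : Finset I) (Y : X → K) (x : X) :
    ρ (s.toList.map g).prod Y x = Y x - ∑ i ∈ s, a i x * Y (e i) := by
  rw [list_prod_apply_of_orthogonal ρ g e a hg horth s.nodup_toList, Finset.sum_map_toList]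

end OrthogonalReflections

lemma Module.Basis.addMonoidHom_apply_eq_sum {ι M A : Type*} [Fintype ι] [AddCommGroup M]
    [Ring A] (b : Module.Basis ι ℤ M) (f : M →+ A) (x : M) :
    f x = ∑ i, (b.repr x i : A) * f (b i) := by
  conv_lhs => rw [← b.sum_repr x]
  simp only [map_sum, map_zsmul, zsmul_eq_mul]

lemma CoxeterSystem.map_apply_comm_of_simple {B W K V V' : Type*} [Group W] {M : CoxeterMatrix B}
    (cs : CoxeterSystem M W) [Semiring K] [AddCommMonoid V] [Module K V] [AddCommMonoid V']
    [Module K V'] (ρ : W →* (V ≃ₗ[K] V)) (ρ' : W →* (V' ≃ₗ[K] V')) (f : V → V')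
    (h : ∀ s v, ρ' (cs.simple s) (f v) = f (ρ (cs.simple s) v)) (w : W) (v : V) :
    ρ' w (f v) = f (ρ w v) := by
  induction w using cs.simple_induction generalizing v with
  | simple s => exact h s v
  | one => simp
  | mul w w' hw hw' => simp only [map_mul, LinearEquiv.mul_apply, hw', hw]

namespace GeomSetting

lemma rcheck_of_snd_eq (G : GeomSetting R ι S W) (i j : ι) (s : S) :
    G.rcheck (i, s) (j, s) = if i = j then 2 else 0 := by
  simp [rcheck]

lemma rcheck_of_snd_ne (G : GeomSetting R ι S W) (i j : ι) {s t : S} (hst : s ≠ t) :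
    G.rcheck (i, s) (j, t) = G.FD.b.repr (G.FD.b j * G.cartan s t) i := by
  simp [rcheck, hst]

lemma FP_cartan_self (G : GeomSetting R ι S W) (s : S) : G.FP (G.cartan s s) = 2 := by
  rw [cartan, G.cartan_diag, map_ofNat]

lemma sum_rcheck_mul_FP (G : GeomSetting R ι S W) (s : S) (j : ι) (t : S) :
    ∑ i, (G.rcheck (i, s) (j, t) : ℝ) * G.FP (G.FD.b i)
      = G.FP (G.FD.b j) * G.FP (G.cartan s t) := by
  by_cases hst : s = t
  · subst hst
    rw [Finset.sum_eq_single j (fun i _ hij => by simp [rcheck_of_snd_eq, hij]) (by simp),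
      rcheck_of_snd_eq, if_pos rfl, FP_cartan_self]
    push_cast
    ring
  · simp only [rcheck_of_snd_ne G _ j hst]
    rw [← map_mul]
    exact (G.FD.b.addMonoidHom_apply_eq_sum G.FP.toAddMonoidHom _).symm

lemma rhoF_phi_simple_emb (G : GeomSetting R ι S W)
    (rhoE : W →* ((S → ℝ) ≃ₗ[ℝ] (S → ℝ)))
    (hrhoE : ∀ (s : S) (Z : S → ℝ) (t : S),
      rhoE (G.cs.simple s) Z t = Z t - G.FP (G.cartan s t) * Z s)
    (rhoF : G.Wcheck →* (((ι × S) → ℝ) ≃ₗ[ℝ] ((ι × S) → ℝ)))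
    (hrhoF : ∀ (p : ι × S) (Z : (ι × S) → ℝ) (q : ι × S),
      rhoF (G.gen p) Z q = Z q - (G.rcheck p q : ℝ) * Z p)
    (phi : W →* G.Wcheck)
    (hphi : ∀ s : S, phi (G.cs.simple s)
      = ((Finset.univ : Finset ι).toList.map fun i => G.gen (i, s)).prod)
    (s : S) (Z : S → ℝ) :
    rhoF (phi (G.cs.simple s)) (G.emb Z) = G.emb (rhoE (G.cs.simple s) Z) := by
  have horth : ∀ i j, i ≠ j → (G.rcheck (i, s) (j, s) : ℝ) = 0 := fun i j hij => by
    simp [rcheck_of_snd_eq, hij]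
  funext ⟨j, t⟩
  rw [hphi, finset_toList_prod_apply_of_orthogonal rhoF (fun i => G.gen (i, s)) (·, s)
    (fun i q => (G.rcheck (i, s) q : ℝ)) (fun i => hrhoF (i, s)) horth]
  calc G.emb Z (j, t) - ∑ i, (G.rcheck (i, s) (j, t) : ℝ) * G.emb Z (i, s)
      = G.FP (G.FD.b j) * Z t - (∑ i, (G.rcheck (i, s) (j, t) : ℝ) * G.FP (G.FD.b i)) * Z s := by
        simp only [emb, Finset.sum_mul, mul_assoc]
    _ = G.emb (rhoE (G.cs.simple s) Z) (j, t) := by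
        rw [sum_rcheck_mul_FP, emb, hrhoE]
        ring

end GeomSetting

/-- **Proposition 4.7 (dual unfolded identification).** The inclusion
`Hom_R(RΛ_S, ℝ) ⊆ Hom_ℤ(RΛ_S, ℝ)` is `W`-equivariant with respect to the unfolding
homomorphism `φ`: for all `w ∈ W` and `Z ∈ Hom_R(RΛ_S, ℝ)`, `φ(w) · Z = w · Z`; in
particular the subspace `Hom_R(RΛ_S, ℝ)` is invariant under `φ(W)`. -/
theorem dual_inclusion_equivariant (G : GeomSetting R ι S W)
    (rhoE : W →* ((S → ℝ) ≃ₗ[ℝ] (S → ℝ)))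
    (hrhoE : ∀ (s : S) (Z : S → ℝ) (t : S),
      rhoE (G.cs.simple s) Z t = Z t - G.FP (G.cartan s t) * Z s)
    (rhoF : G.Wcheck →* (((ι × S) → ℝ) ≃ₗ[ℝ] ((ι × S) → ℝ)))
    (hrhoF : ∀ (p : ι × S) (Z : (ι × S) → ℝ) (q : ι × S),
      rhoF (G.gen p) Z q = Z q - (G.rcheck p q : ℝ) * Z p)
    (phi : W →* G.Wcheck)
    (hphi : ∀ s : S, phi (G.cs.simple s)
      = ((Finset.univ : Finset ι).toList.map fun i => G.gen (i, s)).prod) :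
    (∀ (w : W) (Z : S → ℝ), rhoF (phi w) (G.emb Z) = G.emb (rhoE w Z))
    ∧ ∀ (w : W) (Y : (ι × S) → ℝ),
        Y ∈ Set.range G.emb → rhoF (phi w) Y ∈ Set.range G.emb := by
  have equivariant : ∀ (w : W) (Z : S → ℝ), rhoF (phi w) (G.emb Z) = G.emb (rhoE w Z) :=
    G.cs.map_apply_comm_of_simple rhoE (rhoF.comp phi) G.emb
      (G.rhoF_phi_simple_emb rhoE hrhoE rhoF hrhoF phi hphi)
  exact ⟨equivariant, fun w _ ⟨Z, hZ⟩ => ⟨rhoE w Z, hZ ▸ (equivariant w Z).symm⟩⟩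


end
end

section
/- Let V be a finite-dimensional real vector space, G a group acting on V by linear automorphisms, and C ⊆ V a closed convex cone with nonempty interior C°. Set T := ∪_{g∈G} g·C and let T° be the topological interior of T. Let A be a set of linear hyperplanes of V. Assume: (i) T° is convex; (ii) A is locally finite in T°, i.e. every x ∈ T° has an open neighbourhood meeting only finitely many members of A; and (iii) T° ∖ ∪_{H∈A} H ⊆ ∪_{g∈G} g·C°. Then T° equals the convex hull of ∪_{g∈G} g·C°. -/
/-!
A point `x ∈ T°` has a neighbourhood `U` meeting only finitely many hyperplanes of `A`. Their
union is closed with empty interior, so some `y ∈ U ∩ T°` has both `y` and its reflection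
`2x - y` off every hyperplane of `A`; by (iii) both lie in `⋃ g·C°`, and `x` is their midpoint.
Conversely each `g·C°` is an open subset of `T`, hence of `T°`, which is convex.
-/

open Set

theorem Set.Finite.dense_compl_biUnion {X : Type*} [TopologicalSpace X] {S : Set (Set X)}
    (hS : S.Finite) (hclosed : ∀ H ∈ S, IsClosed H) (hint : ∀ H ∈ S, interior H = ∅) :
    Dense (⋃ H ∈ S, H)ᶜ := by
  rw [compl_iUnion₂, ← sInter_image]
  exact (hS.image _).dense_sInter (forall_mem_image.2 fun H hH ↦ (hclosed H hH).isOpen_compl)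
    (forall_mem_image.2 fun H hH ↦ interior_eq_empty_iff_dense_compl.1 (hint H hH))

section TopologicalVectorSpace

variable {E : Type*} [AddCommGroup E] [Module ℝ E] [TopologicalSpace E] [IsTopologicalAddGroup E]

theorem mem_convexHull_inter_of_dense {U D : Set E} {x : E} (hU : IsOpen U) (hx : x ∈ U)
    (hD : Dense D) (hDo : IsOpen D) : x ∈ convexHull ℝ (U ∩ D) := by
  let r := Homeomorph.pointReflection x
  obtain ⟨y, ⟨hyU, hryU⟩, hyD, hryD⟩ : ((U ∩ r ⁻¹' U) ∩ (D ∩ r ⁻¹' D)).Nonempty :=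
    (hD.inter_of_isOpen_left (hD.preimage r.isOpenMap) hDo).inter_open_nonempty _
      (hU.inter (hU.preimage r.continuous)) ⟨x, hx, by simpa [r] using hx⟩
  rw [← midpoint_pointReflection_right (R := ℝ) x y]
  exact (convex_convexHull ℝ _).midpoint_mem (subset_convexHull ℝ _ ⟨hyU, hyD⟩)
    (subset_convexHull ℝ _ ⟨hryU, hryD⟩)

theorem subset_convexHull_diff_biUnion_of_locallyFinite {s : Set E} (hs : IsOpen s)
    {A : Set (Set E)} (hclosed : ∀ H ∈ A, IsClosed H) (hint : ∀ H ∈ A, interior H = ∅)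
    (hlocfin : ∀ x ∈ s, ∃ U : Set E, IsOpen U ∧ x ∈ U ∧ {H | H ∈ A ∧ (H ∩ U).Nonempty}.Finite) :
    s ⊆ convexHull ℝ (s \ ⋃ H ∈ A, H) := by
  intro x hx
  obtain ⟨U, hU, hxU, hfin⟩ := hlocfin x hx
  set S := {H | H ∈ A ∧ (H ∩ U).Nonempty}
  have hx' : x ∈ convexHull ℝ ((s ∩ U) ∩ (⋃ H ∈ S, H)ᶜ) :=
    mem_convexHull_inter_of_dense (hs.inter hU) ⟨hx, hxU⟩
      (hfin.dense_compl_biUnion (fun H hH ↦ hclosed H hH.1) (fun H hH ↦ hint H hH.1))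
      (hfin.isClosed_biUnion fun H hH ↦ hclosed H hH.1).isOpen_compl
  refine convexHull_mono ?_ hx'
  rintro y ⟨⟨hys, hyU⟩, hyS⟩
  refine ⟨hys, fun hyA ↦ hyS ?_⟩
  obtain ⟨H, hHA, hyH⟩ := mem_iUnion₂.1 hyA
  exact mem_iUnion₂.2 ⟨H, ⟨hHA, y, hyH, hyU⟩, hyH⟩

end TopologicalVectorSpace

theorem LinearMap.interior_ker_eq_empty {E : Type*} [AddCommGroup E] [Module ℝ E]
    [TopologicalSpace E] [ContinuousAdd E] [ContinuousSMul ℝ E] {f : E →ₗ[ℝ] ℝ} (hf : f ≠ 0) :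
    interior (LinearMap.ker f : Set E) = ∅ := by
  by_contra h
  exact hf (LinearMap.ker_eq_top.1 ((LinearMap.ker f).eq_top_of_nonempty_interior'
    (nonempty_iff_ne_empty.2 h)))

theorem titsCone_eq_convexHull_of_orbit_interior_general
    {V : Type*} [NormedAddCommGroup V] [NormedSpace ℝ V] [FiniteDimensional ℝ V]
    {G : Type*} [Group G] (ρ : G →* (V ≃ₗ[ℝ] V))
    (C : Set V)
    (A : Set (Set V))
    (hA : ∀ H ∈ A, ∃ f : V →ₗ[ℝ] ℝ, f ≠ 0 ∧ H = {x | f x = 0})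
    (T : Set V) (hT : T = ⋃ g : G, ρ g '' C)
    (hTconv : Convex ℝ (interior T))
    (hlocfin : ∀ x ∈ interior T, ∃ U : Set V, IsOpen U ∧ x ∈ U ∧
      {H | H ∈ A ∧ (H ∩ U).Nonempty}.Finite)
    (hcover : interior T \ (⋃ H ∈ A, H) ⊆ ⋃ g : G, ρ g '' interior C) :
    interior T = convexHull ℝ (⋃ g : G, ρ g '' interior C) := by
  have hclosed : ∀ H ∈ A, IsClosed H := by
    intro H hH
    obtain ⟨f, -, rfl⟩ := hA H hH
    exact isClosed_eq f.continuous_of_finiteDimensional continuous_const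
  have hint : ∀ H ∈ A, interior H = ∅ := by
    intro H hH
    obtain ⟨f, hf, rfl⟩ := hA H hH
    exact LinearMap.interior_ker_eq_empty hf
  have horbit (g : G) : ρ g '' interior C ⊆ interior T :=
    ((ρ g).toContinuousLinearEquiv.isOpenMap.image_interior_subset C).trans
      (interior_mono (hT ▸ subset_iUnion (fun g ↦ ρ g '' C) g))
  refine Subset.antisymm ?_ (convexHull_min (iUnion_subset horbit) hTconv)
  exact (subset_convexHull_diff_biUnion_of_locallyFinite isOpen_interior hclosed hint
    hlocfin).trans (convexHull_mono hcover)

/-- **Lemma 4.13 (Tits cone as a convex hull).** Let `V` be a finite-dimensional real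
vector space, `G` a group acting linearly on `V`, and `C` a closed convex cone with
nonempty interior. Set `T := ⋃_g g·C`. If the interior `T°` of `T` is convex, the set `A`
of linear hyperplanes is locally finite in `T°`, and `T° ∖ ⋃_{H ∈ A} H ⊆ ⋃_g g·C°`, then
`T°` is the convex hull of `⋃_g g·C°`. -/
theorem titsCone_eq_convexHull_of_orbit_interior
    {V : Type*} [NormedAddCommGroup V] [NormedSpace ℝ V] [FiniteDimensional ℝ V]
    {G : Type*} [Group G] (ρ : G →* (V ≃ₗ[ℝ] V))
    (C : Set V) (hCclosed : IsClosed C) (hCconv : Convex ℝ C)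
    (hCcone : ∀ x ∈ C, ∀ a : ℝ, 0 ≤ a → a • x ∈ C)
    (hCint : (interior C).Nonempty)
    (A : Set (Set V))
    (hA : ∀ H ∈ A, ∃ f : V →ₗ[ℝ] ℝ, f ≠ 0 ∧ H = {x | f x = 0})
    (T : Set V) (hT : T = ⋃ g : G, ρ g '' C)
    (hTconv : Convex ℝ (interior T))
    (hlocfin : ∀ x ∈ interior T, ∃ U : Set V, IsOpen U ∧ x ∈ U ∧
      {H | H ∈ A ∧ (H ∩ U).Nonempty}.Finite)
    (hcover : interior T \ (⋃ H ∈ A, H) ⊆ ⋃ g : G, ρ g '' interior C) :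
    interior T = convexHull ℝ (⋃ g : G, ρ g '' interior C) :=
  titsCone_eq_convexHull_of_orbit_interior_general ρ C A hA T hT hTconv hlocfin hcover
end
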